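/- arXiv:1712.08163 — 2 statements merged into one kernel-verified Lean document; each statement's English description precedes it below -/
import Mathlib

section
/- If X ⊆ ℝⁿ is a polyhedron X = {x | A x ≤ b} (finitely many linear inequalities), then for every activation pattern P : Fin n → Bool, the image of X ∩ D_P under ReLU is ReLU''(X ∩ D_P) = {y ∈ ℝⁿ | ∃ x ∈ X ∩ D_P, y = diag P x}, and this set can be written as the intersection of finitely many half-spaces intersected with finitely many open half-spaces. -/
open Finset in
lemma sum_update (n : ℕ) (c x : Fin n → ℝ) (i₀ : Fin n) (t : ℝ) :
    ∑ i, c i * Function.update x i₀ t i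
      = c i₀ * t + ∑ i, (if i = i₀ then 0 else c i) * x i := by
  rw [← Finset.add_sum_erase _ (fun i => c i * Function.update x i₀ t i) (mem_univ i₀),
      ← Finset.add_sum_erase _ (fun i => (if i = i₀ then 0 else c i) * x i) (mem_univ i₀)]
  simp only [Function.update_self, if_true, zero_mul, zero_add]
  congr 1
  apply Finset.sum_congr rfl
  intro i hi
  have h : i ≠ i₀ := (Finset.mem_erase.mp hi).1
  simp [h, Function.update_apply]

open Finset in
lemma fm_one (n m : ℕ) (a : Fin m → Fin n → ℝ) (b : Fin m → ℝ) (i₀ : Fin n) :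
    ∃ (k : ℕ) (c : Fin k → Fin n → ℝ) (d : Fin k → ℝ),
      ∀ x : Fin n → ℝ,
        (∃ t, ∀ j, ∑ i, a j i * Function.update x i₀ t i ≤ b j) ↔
        (∀ j, ∑ i, c j i * x i ≤ d j) := by
  classical
  set ghat : Fin m → Fin n → ℝ := fun j i => if i = i₀ then 0 else a j i with hghat
  set S : Fin m → (Fin n → ℝ) → ℝ := fun j x => ∑ i, ghat j i * x i with hS
  -- combined constraints indexed by J
  let J := Sum (Fin m) (Fin m × Fin m)
  let c' : J → Fin n → ℝ := fun jk =>
    match jk with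
    | Sum.inl j => if a j i₀ = 0 then ghat j else 0
    | Sum.inr (j, k) => if 0 < a j i₀ ∧ a k i₀ < 0 then
        (fun i => ghat j i / a j i₀ - ghat k i / a k i₀) else 0
  let d' : J → ℝ := fun jk =>
    match jk with
    | Sum.inl j => if a j i₀ = 0 then b j else 0
    | Sum.inr (j, k) => if 0 < a j i₀ ∧ a k i₀ < 0 then
        b j / a j i₀ - b k / a k i₀ else 0
  have hsum : ∀ (j : Fin m) (x : Fin n → ℝ) (t : ℝ),
      ∑ i, a j i * Function.update x i₀ t i = a j i₀ * t + S j x := by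
    intro j x t
    rw [sum_update]
  have hcomb : ∀ (j k : Fin m) (x : Fin n → ℝ),
      ∑ i, (ghat j i / a j i₀ - ghat k i / a k i₀) * x i
        = S j x / a j i₀ - S k x / a k i₀ := by
    intro j k x
    simp only [sub_mul, Finset.sum_sub_distrib, hS]
    rw [Finset.sum_div, Finset.sum_div]
    congr 1 <;> · apply Finset.sum_congr rfl; intro i _; ring
  have key : ∀ x : Fin n → ℝ,
      (∃ t, ∀ j, ∑ i, a j i * Function.update x i₀ t i ≤ b j) ↔
      (∀ jk : J, ∑ i, c' jk i * x i ≤ d' jk) := by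
    intro x
    constructor
    · rintro ⟨t, ht⟩ jk
      have ht' : ∀ j, a j i₀ * t ≤ b j - S j x := by
        intro j; have := ht j; rw [hsum] at this; linarith
      match jk with
      | Sum.inl j =>
        by_cases hc : a j i₀ = 0
        · simp only [c', d', if_pos hc]
          have := ht' j; rw [hc, zero_mul] at this
          have : S j x ≤ b j := by linarith
          simpa [hS] using this
        · simp [c', d', hc]
      | Sum.inr (j, k) =>
        by_cases hc : 0 < a j i₀ ∧ a k i₀ < 0
        · simp only [c', d', if_pos hc]
          rw [hcomb]
          have h1 : t ≤ (b j - S j x) / a j i₀ := (le_div_iff₀ hc.1).mpr (by linarith [ht' j])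
          have h2 : (b k - S k x) / a k i₀ ≤ t := (div_le_iff_of_neg hc.2).mpr (by linarith [ht' k])
          have h3 : (b k - S k x) / a k i₀ ≤ (b j - S j x) / a j i₀ := le_trans h2 h1
          rw [sub_div, sub_div] at h3
          linarith
        · simp [c', d', hc]
    · intro h
      set U : Finset (Fin m) := univ.filter (fun j => 0 < a j i₀) with hU
      set L : Finset (Fin m) := univ.filter (fun j => a j i₀ < 0) with hL
      have hzero : ∀ j, a j i₀ = 0 → S j x ≤ b j := by
        intro j hj
        have := h (Sum.inl j)
        simpa [c', d', hj, hS] using this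
      have hJR : ∀ j k, 0 < a j i₀ → a k i₀ < 0 →
          (b k - S k x) / a k i₀ ≤ (b j - S j x) / a j i₀ := by
        intro j k hj hk
        have := h (Sum.inr (j, k))
        simp only [c', d', if_pos (And.intro hj hk)] at this
        rw [hcomb] at this
        rw [sub_div, sub_div]
        linarith
      have goal : ∃ t, ∀ j, a j i₀ * t ≤ b j - S j x := by
        by_cases hUn : U.Nonempty
        · refine ⟨U.inf' hUn (fun j => (b j - S j x) / a j i₀), ?_⟩
          intro j
          rcases lt_trichotomy (a j i₀) 0 with hj | hj | hj
          · have hle : (b j - S j x) / a j i₀ ≤ U.inf' hUn (fun j => (b j - S j x) / a j i₀) := by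
              apply Finset.le_inf'
              intro k hk
              exact hJR k j (by simpa [hU] using hk) hj
            have := (div_le_iff_of_neg hj).mp hle
            linarith [this]
          · rw [hj, zero_mul]; linarith [hzero j hj]
          · have hle : U.inf' hUn (fun j => (b j - S j x) / a j i₀) ≤ (b j - S j x) / a j i₀ :=
              Finset.inf'_le (fun j => (b j - S j x) / a j i₀) (show j ∈ U by simp [hU, hj])
            have := (le_div_iff₀ hj).mp hle
            linarith
        · by_cases hLn : L.Nonempty
          · refine ⟨L.sup' hLn (fun j => (b j - S j x) / a j i₀), ?_⟩
            intro j
            rcases lt_trichotomy (a j i₀) 0 with hj | hj | hj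
            · have hle : (b j - S j x) / a j i₀ ≤ L.sup' hLn (fun j => (b j - S j x) / a j i₀) :=
                Finset.le_sup' (fun j => (b j - S j x) / a j i₀) (show j ∈ L by simp [hL, hj])
              have := (div_le_iff_of_neg hj).mp hle
              linarith
            · rw [hj, zero_mul]; linarith [hzero j hj]
            · exact (hUn ⟨j, by simp [hU, hj]⟩).elim
          · refine ⟨0, ?_⟩
            intro j
            have hj : a j i₀ = 0 := by
              rcases lt_trichotomy (a j i₀) 0 with hj | hj | hj
              · exact (hLn ⟨j, by simp [hL, hj]⟩).elim
              · exact hj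
              · exact (hUn ⟨j, by simp [hU, hj]⟩).elim
            rw [hj, zero_mul]; linarith [hzero j hj]
      obtain ⟨t, ht⟩ := goal
      exact ⟨t, fun j => by rw [hsum]; linarith [ht j]⟩
  -- reindex J to Fin k
  let e := Fintype.equivFin J
  refine ⟨Fintype.card J, c' ∘ e.symm, d' ∘ e.symm, ?_⟩
  intro x
  rw [key x]
  constructor
  · intro h j; exact h (e.symm j)
  · intro h jk; simpa using h (e jk)

open Finset in
lemma elim_finset (n : ℕ) (s : Finset (Fin n)) :
    ∀ (m : ℕ) (a : Fin m → Fin n → ℝ) (b : Fin m → ℝ),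
    ∃ (k : ℕ) (c : Fin k → Fin n → ℝ) (d : Fin k → ℝ),
      {y : Fin n → ℝ | ∃ x : Fin n → ℝ, (∀ i, i ∉ s → x i = y i) ∧ ∀ j, ∑ i, a j i * x i ≤ b j}
        = {y | ∀ j, ∑ i, c j i * y i ≤ d j} := by
  induction s using Finset.induction_on with
  | empty =>
    intro m a b
    refine ⟨m, a, b, ?_⟩
    ext y
    constructor
    · rintro ⟨x, hx, h⟩
      have hxy : x = y := funext fun i => hx i (Finset.notMem_empty i)
      rw [← hxy]
      exact h
    · intro h
      exact ⟨y, fun i _ => rfl, h⟩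
  | @insert i₀ s' hi₀ ih =>
    intro m a b
    obtain ⟨k, c, d, hfm⟩ := fm_one n m a b i₀
    obtain ⟨k', c', d', hih⟩ := ih k c d
    refine ⟨k', c', d', ?_⟩
    rw [← hih]
    ext y
    constructor
    · rintro ⟨x, hx, hA⟩
      refine ⟨Function.update x i₀ (y i₀), ?_, ?_⟩
      · intro i his'
        rcases eq_or_ne i i₀ with rfl | hne
        · simp
        · rw [Function.update_of_ne hne]
          exact hx i (by simp [hne, his'])
      · rw [← hfm]
        refine ⟨x i₀, ?_⟩
        rw [Function.update_idem, Function.update_eq_self]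
        exact hA
    · rintro ⟨x, hx, hC⟩
      rw [← hfm] at hC
      obtain ⟨t, ht⟩ := hC
      refine ⟨Function.update x i₀ t, ?_, ht⟩
      intro i hins
      have h1 : i ≠ i₀ := fun h => hins (by simp [h])
      have h2 : i ∉ s' := fun h => hins (by simp [h])
      rw [Function.update_of_ne h1]
      exact hx i h2


def relu (n : ℕ) (x : Fin n → ℝ) : Fin n → ℝ := fun i => max (x i) 0

def DP (n : ℕ) (P : Fin n → Bool) : Set (Fin n → ℝ) :=
  {x | ∀ i, if P i then 0 < x i else x i ≤ 0}

def diag (n : ℕ) (P : Fin n → Bool) (x : Fin n → ℝ) : Fin n → ℝ :=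
  fun i => if P i then x i else 0


open Finset in
lemma single_sum (n : ℕ) (i : Fin n) (v : ℝ) (x : Fin n → ℝ) :
    ∑ i', (if i' = i then v else 0) * x i' = v * x i := by
  simp [ite_mul, Finset.sum_ite_eq']

theorem relu_image_region_polyhedron (n m : ℕ)
    (a : Fin m → Fin n → ℝ) (b : Fin m → ℝ) (P : Fin n → Bool) :
    let X : Set (Fin n → ℝ) := {x | ∀ j, ∑ i, a j i * x i ≤ b j}
    relu n '' (X ∩ DP n P) = {y | ∃ x ∈ X ∩ DP n P, y = diag n P x} ∧
    ∃ (k₁ k₂ : ℕ) (c : Fin k₁ → Fin n → ℝ) (d : Fin k₁ → ℝ)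
      (c' : Fin k₂ → Fin n → ℝ) (d' : Fin k₂ → ℝ),
      relu n '' (X ∩ DP n P) =
        {y | (∀ j, ∑ i, c j i * y i ≤ d j) ∧ (∀ j, ∑ i, c' j i * y i < d' j)} := by
  classical
  intro X
  have hrelu : ∀ x ∈ DP n P, relu n x = diag n P x := by
    intro x hx
    funext i
    have h := hx i
    by_cases hP : P i = true
    · simp only [hP, if_true] at h
      simp [relu, diag, hP, max_eq_left h.le]
    · simp only [hP, if_false] at h
      simp [relu, diag, hP, max_eq_right h]
  have part1 : relu n '' (X ∩ DP n P) = {y | ∃ x ∈ X ∩ DP n P, y = diag n P x} := by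
    ext y
    constructor
    · rintro ⟨x, hx, rfl⟩
      exact ⟨x, hx, hrelu x hx.2⟩
    · rintro ⟨x, hx, rfl⟩
      exact ⟨x, hx, hrelu x hx.2⟩
  refine ⟨part1, ?_⟩
  -- augmented system including sign constraints on the inactive coordinates
  set A₂ : Fin (m + n) → Fin n → ℝ :=
    Fin.addCases (fun j => a j)
      (fun i i' => if P i = true then 0 else if i' = i then 1 else 0) with hA₂def
  set b₂ : Fin (m + n) → ℝ := Fin.addCases b (fun _ => 0) with hb₂def
  have hA₂ : ∀ x : Fin n → ℝ,
      (∀ j, ∑ i, A₂ j i * x i ≤ b₂ j) ↔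
      ((∀ j, ∑ i, a j i * x i ≤ b j) ∧ ∀ i, P i = false → x i ≤ 0) := by
    intro x
    constructor
    · intro h
      refine ⟨fun j => ?_, fun i hPi => ?_⟩
      · have := h (Fin.castAdd n j)
        simpa [hA₂def, hb₂def, Fin.addCases_left] using this
      · have := h (Fin.natAdd m i)
        simpa [hA₂def, hb₂def, Fin.addCases_right, hPi, single_sum] using this
    · rintro ⟨h1, h2⟩ j
      refine Fin.addCases ?_ ?_ j
      · intro j'
        simpa [hA₂def, hb₂def, Fin.addCases_left] using h1 j'
      · intro i
        by_cases hPi : P i = true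
        · simp [hA₂def, hb₂def, Fin.addCases_right, hPi]
        · have hf : P i = false := by simpa using hPi
          simpa [hA₂def, hb₂def, Fin.addCases_right, hf, single_sum] using h2 i hf
  set s : Finset (Fin n) := Finset.univ.filter (fun i => P i = false) with hs
  have hmem : ∀ i, i ∉ s ↔ P i = true := by
    intro i
    simp [hs]
  obtain ⟨k, c, d, hElim⟩ := elim_finset n s (m + n) A₂ b₂
  have hElim' : ∀ y : Fin n → ℝ,
      (∃ x : Fin n → ℝ, (∀ i, i ∉ s → x i = y i) ∧ ∀ j, ∑ i, A₂ j i * x i ≤ b₂ j) ↔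
      (∀ j, ∑ i, c j i * y i ≤ d j) := fun y => Set.ext_iff.mp hElim y
  have hchar : ∀ y : Fin n → ℝ, (∃ x ∈ X ∩ DP n P, y = diag n P x) ↔
      ((∀ j, ∑ i, c j i * y i ≤ d j) ∧ (∀ i, P i = false → y i = 0) ∧
        (∀ i, P i = true → 0 < y i)) := by
    intro y
    constructor
    · rintro ⟨x, ⟨hxX, hxD⟩, rfl⟩
      have hyt : ∀ i, P i = true → diag n P x i = x i := fun i h => by simp [diag, h]
      have hyf : ∀ i, P i = false → diag n P x i = 0 := fun i h => by simp [diag, h]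
      refine ⟨?_, hyf, fun i h => by rw [hyt i h]; simpa [h] using hxD i⟩
      apply (hElim' _).mp
      refine ⟨x, ?_, (hA₂ x).mpr ⟨hxX, fun i hf => by simpa [hf] using hxD i⟩⟩
      intro i hi
      exact (hyt i ((hmem i).mp hi)).symm
    · rintro ⟨hFM, hzero, hpos⟩
      obtain ⟨x, hxy, hx⟩ := (hElim' y).mpr hFM
      obtain ⟨hxX, hxneg⟩ := (hA₂ x).mp hx
      refine ⟨x, ⟨hxX, ?_⟩, ?_⟩
      · intro i
        by_cases hPi : P i = true
        · simp only [hPi, if_true]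
          rw [hxy i ((hmem i).mpr hPi)]
          exact hpos i hPi
        · have hf : P i = false := by simpa using hPi
          simp only [hf, Bool.false_eq_true, if_false]
          exact hxneg i hf
      · funext i
        by_cases hPi : P i = true
        · simp [diag, hPi, (hxy i ((hmem i).mpr hPi)).symm]
        · have hf : P i = false := by simpa using hPi
          simp [diag, hf, hzero i hf]
  -- final polyhedral description
  set c₁ : Fin (k + (n + n)) → Fin n → ℝ :=
    Fin.addCases c (Fin.addCases
      (fun i i' => if P i = true then 0 else if i' = i then 1 else 0)
      (fun i i' => if P i = true then 0 else if i' = i then -1 else 0)) with hc₁def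
  set d₁ : Fin (k + (n + n)) → ℝ :=
    Fin.addCases d (Fin.addCases (fun _ => 0) (fun _ => 0)) with hd₁def
  set c₂ : Fin n → Fin n → ℝ :=
    (fun i i' => if P i = true then (if i' = i then -1 else 0) else 0) with hc₂def
  set d₂ : Fin n → ℝ := (fun i => if P i = true then 0 else 1) with hd₂def
  refine ⟨k + (n + n), n, c₁, d₁, c₂, d₂, ?_⟩
  rw [part1]
  ext y
  rw [Set.mem_setOf_eq, hchar y, Set.mem_setOf_eq]
  constructor
  · rintro ⟨hFM, hzero, hpos⟩
    constructor
    · intro j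
      refine Fin.addCases ?_ ?_ j
      · intro j'
        simpa [hc₁def, hd₁def, Fin.addCases_left] using hFM j'
      · intro j'
        refine Fin.addCases ?_ ?_ j'
        · intro i
          simp only [hc₁def, hd₁def, Fin.addCases_right, Fin.addCases_left]
          by_cases hPi : P i = true
          · simp [hPi]
          · have hf : P i = false := by simpa using hPi
            have := hzero i hf
            simp only [hf, Bool.false_eq_true, if_false]
            rw [single_sum, this]
            simp
        · intro i
          simp only [hc₁def, hd₁def, Fin.addCases_right]
          by_cases hPi : P i = true
          · simp [hPi]
          · have hf : P i = false := by simpa using hPi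
            have := hzero i hf
            simp only [hf, Bool.false_eq_true, if_false]
            rw [single_sum, this]
            simp
    · intro i
      by_cases hPi : P i = true
      · have := hpos i hPi
        simp only [hc₂def, hd₂def, hPi, if_true]
        rw [single_sum]
        linarith
      · have hf : P i = false := by simpa using hPi
        simp [hc₂def, hd₂def, hf]
  · rintro ⟨hns, hst⟩
    refine ⟨?_, ?_, ?_⟩
    · intro j
      simpa [hc₁def, hd₁def, Fin.addCases_left] using hns (Fin.castAdd (n + n) j)
    · intro i hf
      have h1 := hns (Fin.natAdd k (Fin.castAdd n i))
      have h2 := hns (Fin.natAdd k (Fin.natAdd n i))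
      simp only [hc₁def, hd₁def, Fin.addCases_right, Fin.addCases_left, hf,
        Bool.false_eq_true, if_false] at h1 h2
      rw [single_sum] at h1 h2
      linarith
    · intro i hPi
      have := hst i
      simp only [hc₂def, hd₂def, hPi, if_true] at this
      rw [single_sum] at this
      linarith
end

section
/- If the input set X ⊆ ℝⁿ is a finite union of polyhedra (each defined by finitely many strict or non-strict linear inequalities), then the output reachable set ReLU''(X) of the componentwise ReLU is also a finite union of such polyhedra. -/
/-- A generalized polyhedron: finitely many non-strict and strict linear inequalities. -/
def genPoly (n k k' : ℕ) (a : Fin k → Fin n → ℝ) (b : Fin k → ℝ)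
    (c : Fin k' → Fin n → ℝ) (d : Fin k' → ℝ) : Set (Fin n → ℝ) :=
  {x | (∀ j, ∑ i, a j i * x i ≤ b j) ∧ (∀ j, ∑ i, c j i * x i < d j)}

/-!
On the sign region `{x | ∀ i, x i < 0 ↔ i ∈ s}`, which is a polyhedron, ReLU is the linear map
zeroing the coordinates in `s`. Zeroing one coordinate `i` amounts to sweeping the set along the
basis vector `eᵢ` and intersecting with `{y | y i = 0}`, so everything reduces to the
Fourier–Motzkin fact that sweeping a polyhedron along a line gives a polyhedron. By Helly's theorem
on the line, `y` lies in the sweep of `⋂ Hⱼ` as soon as it lies in the sweep of each `Hⱼ ∩ Hₖ`; and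
the sweep of two half-spaces is the whole space, one of them, their intersection, or the
half-space cut out by the combination of the two inequalities that eliminates the direction.
-/

open Set Filter
open scoped Pointwise

section LowerRay

variable {α : Type*}

def IsLowerRay [Preorder α] (I : Set α) : Prop := ∃ b, I = Iic b ∨ I = Iio b

theorem IsLowerRay.mem_atBot [Preorder α] [NoBotOrder α] {I : Set α} (hI : IsLowerRay I) :
    I ∈ atBot := by
  obtain ⟨b, rfl | rfl⟩ := hI
  exacts [Iic_mem_atBot b, Iio_mem_atBot b]

theorem IsLowerRay.add [AddCommGroup α] [LinearOrder α] [IsOrderedAddMonoid α] [DenselyOrdered α]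
    {I J : Set α} (hI : IsLowerRay I) (hJ : IsLowerRay J) : IsLowerRay (I + J) := by
  obtain ⟨a, rfl | rfl⟩ := hI <;> obtain ⟨b, rfl | rfl⟩ := hJ <;> refine ⟨a + b, ?_⟩
  · refine .inl (subset_antisymm (Iic_add_Iic_subset a b) fun x hx => ?_)
    exact ⟨x - b, sub_le_iff_le_add.2 hx, b, le_rfl, sub_add_cancel x b⟩
  · refine .inr (subset_antisymm (Iic_add_Iio_subset a b) fun x hx => ?_)
    exact ⟨a, le_rfl, x - a, sub_lt_iff_lt_add'.2 hx, add_sub_cancel a x⟩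
  · refine .inr (subset_antisymm (Iio_add_Iic_subset a b) fun x hx => ?_)
    exact ⟨x - b, sub_lt_iff_lt_add.2 hx, b, le_rfl, sub_add_cancel x b⟩
  · refine .inr (subset_antisymm ?_ fun x hx => ?_)
    · rintro _ ⟨y, hy, z, hz, rfl⟩
      exact add_lt_add hy hz
    obtain ⟨c, hbc, hca⟩ := exists_between (sub_lt_iff_lt_add.2 hx)
    exact ⟨c, hca, x - c, sub_lt_comm.1 hbc, add_sub_cancel c x⟩

variable [Field α] [LinearOrder α] [IsStrictOrderedRing α] {I : Set α}

theorem IsLowerRay.convex (hI : IsLowerRay I) : Convex α I := by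
  obtain ⟨b, rfl | rfl⟩ := hI
  exacts [convex_Iic b, convex_Iio b]

theorem IsLowerRay.smul_of_pos (hI : IsLowerRay I) {c : α} (hc : 0 < c) :
    IsLowerRay (c • I) := by
  obtain ⟨b, rfl | rfl⟩ := hI
  exacts [⟨c * b, .inl (LinearOrderedField.smul_Iic hc)⟩,
    ⟨c * b, .inr (LinearOrderedField.smul_Iio hc)⟩]

end LowerRay

section Polyhedra

variable (𝕜 : Type*) {E : Type*} [Semiring 𝕜] [Preorder 𝕜] [AddCommMonoid E] [Module 𝕜 E]

def IsHalfspace (H : Set E) : Prop :=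
  ∃ (f : Module.Dual 𝕜 E) (I : Set 𝕜), IsLowerRay I ∧ f ⁻¹' I = H

def IsPolyhedron (P : Set E) : Prop :=
  ∃ F : Set (Set E), F.Finite ∧ (∀ H ∈ F, IsHalfspace 𝕜 H) ∧ ⋂₀ F = P

def IsFiniteUnionOfPolyhedra (S : Set E) : Prop :=
  ∃ F : Set (Set E), F.Finite ∧ (∀ P ∈ F, IsPolyhedron 𝕜 P) ∧ ⋃₀ F = S

variable {𝕜}

theorem IsHalfspace.isPolyhedron {H : Set E} (hH : IsHalfspace 𝕜 H) : IsPolyhedron 𝕜 H :=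
  ⟨{H}, finite_singleton H, by simpa using hH, sInter_singleton H⟩

theorem isPolyhedron_setOf_le (f : Module.Dual 𝕜 E) (b : 𝕜) : IsPolyhedron 𝕜 {x | f x ≤ b} :=
  IsHalfspace.isPolyhedron ⟨f, _, ⟨b, .inl rfl⟩, rfl⟩

theorem isPolyhedron_setOf_lt (f : Module.Dual 𝕜 E) (b : 𝕜) : IsPolyhedron 𝕜 {x | f x < b} :=
  IsHalfspace.isPolyhedron ⟨f, _, ⟨b, .inr rfl⟩, rfl⟩

theorem isPolyhedron_univ : IsPolyhedron 𝕜 (univ : Set E) :=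
  ⟨∅, finite_empty, by simp, sInter_empty⟩

theorem IsPolyhedron.inter {P Q : Set E} (hP : IsPolyhedron 𝕜 P) (hQ : IsPolyhedron 𝕜 Q) :
    IsPolyhedron 𝕜 (P ∩ Q) := by
  obtain ⟨F, hF, hFH, rfl⟩ := hP
  obtain ⟨G, hG, hGH, rfl⟩ := hQ
  exact ⟨F ∪ G, hF.union hG, by simpa [or_imp, forall_and] using ⟨hFH, hGH⟩, sInter_union F G⟩

theorem IsPolyhedron.iInter {ι : Type*} [Finite ι] {P : ι → Set E}
    (hP : ∀ i, IsPolyhedron 𝕜 (P i)) : IsPolyhedron 𝕜 (⋂ i, P i) := by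
  choose F hF hFH hFP using hP
  refine ⟨⋃ i, F i, finite_iUnion hF, fun H hH => ?_, by simp [sInter_iUnion, hFP]⟩
  obtain ⟨i, hi⟩ := mem_iUnion.1 hH
  exact hFH i H hi

theorem IsPolyhedron.biInter {ι : Type*} {s : Set ι} (hs : s.Finite) {P : ι → Set E}
    (hP : ∀ i ∈ s, IsPolyhedron 𝕜 (P i)) : IsPolyhedron 𝕜 (⋂ i ∈ s, P i) := by
  have := hs.to_subtype
  rw [biInter_eq_iInter]
  exact .iInter fun i => hP i i.2

theorem IsPolyhedron.isFiniteUnionOfPolyhedra {P : Set E} (hP : IsPolyhedron 𝕜 P) :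
    IsFiniteUnionOfPolyhedra 𝕜 P :=
  ⟨{P}, finite_singleton P, by simpa using hP, sUnion_singleton P⟩

theorem IsFiniteUnionOfPolyhedra.iUnion {ι : Type*} [Finite ι] {S : ι → Set E}
    (hS : ∀ i, IsFiniteUnionOfPolyhedra 𝕜 (S i)) : IsFiniteUnionOfPolyhedra 𝕜 (⋃ i, S i) := by
  choose F hF hFP hFS using hS
  refine ⟨⋃ i, F i, finite_iUnion hF, fun P hP => ?_, by simp [sUnion_iUnion, hFS]⟩
  obtain ⟨i, hi⟩ := mem_iUnion.1 hP
  exact hFP i P hi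

theorem IsFiniteUnionOfPolyhedra.inter_isPolyhedron {S P : Set E}
    (hS : IsFiniteUnionOfPolyhedra 𝕜 S) (hP : IsPolyhedron 𝕜 P) :
    IsFiniteUnionOfPolyhedra 𝕜 (S ∩ P) := by
  obtain ⟨F, hF, hFP, rfl⟩ := hS
  refine ⟨(· ∩ P) '' F, hF.image _, forall_mem_image.2 fun Q hQ => (hFP Q hQ).inter hP, ?_⟩
  rw [sUnion_image, sUnion_eq_biUnion, iUnion₂_inter]

end Polyhedra

section Sweep

variable (𝕜 : Type*) {E : Type*} [Ring 𝕜] [AddCommGroup E] [Module 𝕜 E]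

def sweep (v : E) (S : Set E) : Set E := {y | ∃ t : 𝕜, y + t • v ∈ S}

variable {𝕜}

theorem sweep_neg (v : E) (S : Set E) : sweep 𝕜 (-v) S = sweep 𝕜 v S := by
  ext y
  exact (Equiv.neg 𝕜).exists_congr fun t => by simp

theorem sweep_univ (v : E) : sweep 𝕜 v univ = univ :=
  eq_univ_of_forall fun _ => ⟨0, trivial⟩

theorem sweep_iUnion {ι : Sort*} (v : E) (S : ι → Set E) :
    sweep 𝕜 v (⋃ i, S i) = ⋃ i, sweep 𝕜 v (S i) := by
  ext y
  simp only [sweep, mem_iUnion, mem_ofPred_eq]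
  exact exists_comm

theorem sweep_preimage_inter_of_apply_eq_zero {v : E} {f : Module.Dual 𝕜 E} (hf : f v = 0)
    (I : Set 𝕜) (S : Set E) : sweep 𝕜 v (f ⁻¹' I ∩ S) = f ⁻¹' I ∩ sweep 𝕜 v S := by
  ext y
  simp [sweep, hf]

theorem sweep_preimage_of_apply_eq_zero {v : E} {f : Module.Dual 𝕜 E} (hf : f v = 0)
    (I : Set 𝕜) : sweep 𝕜 v (f ⁻¹' I) = f ⁻¹' I := by
  simpa [sweep_univ] using sweep_preimage_inter_of_apply_eq_zero hf I univ

theorem image_update_zero_eq_inter_sweep {ι : Type*} [DecidableEq ι] (i : ι) (S : Set (ι → 𝕜)) :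
    (Function.update · i 0) '' S = {y | y i = 0} ∩ sweep 𝕜 (Pi.single i 1) S := by
  ext y
  constructor
  · rintro ⟨x, hx, rfl⟩
    refine ⟨by simp, x i, ?_⟩
    convert hx using 1
    ext j
    rcases eq_or_ne j i with rfl | hj <;> simp [*]
  · rintro ⟨hy : y i = 0, t, ht⟩
    refine ⟨_, ht, ?_⟩
    ext j
    rcases eq_or_ne j i with rfl | hj <;> simp [*]

end Sweep

section SweepPolyhedra

variable {𝕜 E : Type*} [Field 𝕜] [LinearOrder 𝕜] [IsStrictOrderedRing 𝕜]
  [AddCommGroup E] [Module 𝕜 E]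

theorem IsHalfspace.convex {H : Set E} (hH : IsHalfspace 𝕜 H) : Convex 𝕜 H := by
  obtain ⟨f, I, hI, rfl⟩ := hH
  exact hI.convex.linear_preimage f

theorem sweep_sInter_eq_biInter_sweep_inter {v : E} {F : Set (Set E)} (hF : F.Finite)
    (hconv : ∀ H ∈ F, Convex 𝕜 H) :
    sweep 𝕜 v (⋂₀ F) = ⋂ H₁ ∈ F, ⋂ H₂ ∈ F, sweep 𝕜 v (H₁ ∩ H₂) := by
  ext y
  simp only [mem_iInter]
  refine ⟨fun ⟨t, ht⟩ H₁ h₁ H₂ h₂ => ⟨t, ht H₁ h₁, ht H₂ h₂⟩, fun hpair => ?_⟩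
  let T (H : Set E) : Set 𝕜 := {t | y + t • v ∈ H}
  have hT (H : Set E) (hH : H ∈ F) : Convex 𝕜 (T H) := by
    have : T H = AffineMap.lineMap y (y + v) ⁻¹' H := by
      ext t
      simp [T, AffineMap.lineMap_apply, add_comm]
    exact this ▸ (hconv H hH).affine_preimage _
  obtain ⟨t, ht⟩ := Convex.helly_theorem' (s := hF.toFinset) (F := T) (by simpa using hT)
    fun I hI hcard => by
      rw [Module.finrank_self] at hcard
      simp only [Finite.subset_toFinset] at hI
      obtain h | h | h : I.card = 0 ∨ I.card = 1 ∨ I.card = 2 := by omega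
      · simp [Finset.card_eq_zero.1 h]
      · obtain ⟨H, rfl⟩ := Finset.card_eq_one.1 h
        rw [Finset.set_biInter_singleton]
        exact Nonempty.left (hpair H (hI (by simp)) H (hI (by simp)))
      · obtain ⟨H₁, H₂, -, rfl⟩ := Finset.card_eq_two.1 h
        rw [Finset.set_biInter_insert, Finset.set_biInter_singleton]
        exact hpair H₁ (hI (by simp)) H₂ (hI (by simp))
  exact ⟨t, by simpa [T] using ht⟩

theorem sweep_preimage_inter_preimage_of_pos {v : E} {f g : Module.Dual 𝕜 E}
    (hf : 0 < f v) (hg : 0 < g v) {I J : Set 𝕜} (hI : IsLowerRay I) (hJ : IsLowerRay J) :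
    sweep 𝕜 v (f ⁻¹' I ∩ g ⁻¹' J) = univ := by
  refine eq_univ_of_forall fun y => ?_
  have hline {h : Module.Dual 𝕜 E} (hh : 0 < h v) :
      Tendsto (fun t : 𝕜 => h (y + t • v)) atBot atBot := by
    simpa [add_comm] using tendsto_atBot_add_const_right _ (h y)
      (tendsto_id.atBot_mul_const hh)
  exact (((hline hf).eventually_mem hI.mem_atBot).and
    ((hline hg).eventually_mem hJ.mem_atBot)).exists

theorem sweep_preimage_inter_preimage_of_ne_zero {v : E} {f g : Module.Dual 𝕜 E}
    (hf : f v ≠ 0) (I J : Set 𝕜) :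
    sweep 𝕜 v (f ⁻¹' I ∩ g ⁻¹' J) = (g v • f - f v • g) ⁻¹' (g v • I + (-f v) • J) := by
  ext y
  simp only [sweep, mem_preimage, mem_inter_iff, map_add, map_smul, smul_eq_mul,
    LinearMap.sub_apply, LinearMap.smul_apply, mem_ofPred_eq, Set.mem_add, Set.mem_smul_set]
  constructor
  · rintro ⟨t, hI, hJ⟩
    exact ⟨_, ⟨_, hI, rfl⟩, _, ⟨_, hJ, rfl⟩, by ring⟩
  · rintro ⟨_, ⟨a, ha, rfl⟩, _, ⟨b, hb, rfl⟩, hab⟩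
    refine ⟨(a - f y) / f v, ?_, ?_⟩
    · rwa [div_mul_cancel₀ _ hf, add_sub_cancel]
    · convert hb using 1
      field_simp
      linear_combination hab

theorem sweep_preimage_of_apply_ne_zero {v : E} {f : Module.Dual 𝕜 E} (hf : f v ≠ 0)
    {I : Set 𝕜} (hI : IsLowerRay I) : sweep 𝕜 v (f ⁻¹' I) = univ := by
  rw [← inter_self (f ⁻¹' I)]
  rcases hf.lt_or_gt with hneg | hpos
  · rw [← sweep_neg]
    exact sweep_preimage_inter_preimage_of_pos (by simpa) (by simpa) hI hI
  · exact sweep_preimage_inter_preimage_of_pos hpos hpos hI hI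

theorem IsHalfspace.isPolyhedron_sweep {H : Set E} (hH : IsHalfspace 𝕜 H) (v : E) :
    IsPolyhedron 𝕜 (sweep 𝕜 v H) := by
  obtain ⟨f, I, hI, rfl⟩ := hH
  by_cases hf : f v = 0
  · rw [sweep_preimage_of_apply_eq_zero hf]
    exact IsHalfspace.isPolyhedron ⟨f, I, hI, rfl⟩
  · rw [sweep_preimage_of_apply_ne_zero hf hI]
    exact isPolyhedron_univ

theorem IsHalfspace.isPolyhedron_sweep_inter {H₁ H₂ : Set E} (h₁ : IsHalfspace 𝕜 H₁)
    (h₂ : IsHalfspace 𝕜 H₂) (v : E) : IsPolyhedron 𝕜 (sweep 𝕜 v (H₁ ∩ H₂)) := by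
  obtain ⟨f, I, hI, rfl⟩ := h₁
  obtain ⟨g, J, hJ, rfl⟩ := h₂
  by_cases hf : f v = 0
  · rw [sweep_preimage_inter_of_apply_eq_zero hf]
    exact (IsHalfspace.isPolyhedron ⟨f, I, hI, rfl⟩).inter (isPolyhedron_sweep ⟨g, J, hJ, rfl⟩ v)
  by_cases hg : g v = 0
  · rw [inter_comm, sweep_preimage_inter_of_apply_eq_zero hg]
    exact (IsHalfspace.isPolyhedron ⟨g, J, hJ, rfl⟩).inter (isPolyhedron_sweep ⟨f, I, hI, rfl⟩ v)
  wlog hgpos : 0 < g v generalizing v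
  · rw [← sweep_neg]
    exact this (-v) (by simpa) (by simpa) (by simpa using lt_of_le_of_ne (not_lt.1 hgpos) hg)
  rcases Ne.lt_or_gt hf with hfneg | hfpos
  · rw [sweep_preimage_inter_preimage_of_ne_zero hf]
    exact IsHalfspace.isPolyhedron
      ⟨_, _, (hI.smul_of_pos hgpos).add (hJ.smul_of_pos (neg_pos.2 hfneg)), rfl⟩
  · rw [sweep_preimage_inter_preimage_of_pos hfpos hgpos hI hJ]
    exact isPolyhedron_univ

theorem IsPolyhedron.sweep {P : Set E} (hP : IsPolyhedron 𝕜 P) (v : E) :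
    IsPolyhedron 𝕜 (sweep 𝕜 v P) := by
  obtain ⟨F, hF, hFH, rfl⟩ := hP
  rw [sweep_sInter_eq_biInter_sweep_inter hF fun H hH => (hFH H hH).convex]
  exact .biInter hF fun H₁ h₁ => .biInter hF fun H₂ h₂ =>
    (hFH H₁ h₁).isPolyhedron_sweep_inter (hFH H₂ h₂) v

theorem IsFiniteUnionOfPolyhedra.sweep {S : Set E}
    (hS : IsFiniteUnionOfPolyhedra 𝕜 S) (v : E) : IsFiniteUnionOfPolyhedra 𝕜 (sweep 𝕜 v S) := by
  obtain ⟨F, hF, hFP, rfl⟩ := hS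
  refine ⟨_root_.sweep 𝕜 v '' F, hF.image _, forall_mem_image.2 fun P hP => (hFP P hP).sweep v, ?_⟩
  rw [sUnion_image, sUnion_eq_biUnion]
  simp only [sweep_iUnion]

end SweepPolyhedra

section Coordinates

variable {𝕜 ι : Type*}

theorem isPolyhedron_setOf_apply_le [Semiring 𝕜] [Preorder 𝕜] (i : ι) (b : 𝕜) :
    IsPolyhedron 𝕜 {x : ι → 𝕜 | x i ≤ b} :=
  isPolyhedron_setOf_le (LinearMap.proj i : Module.Dual 𝕜 (ι → 𝕜)) b

theorem isPolyhedron_setOf_apply_lt [Semiring 𝕜] [Preorder 𝕜] (i : ι) (b : 𝕜) :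
    IsPolyhedron 𝕜 {x : ι → 𝕜 | x i < b} :=
  isPolyhedron_setOf_lt (LinearMap.proj i : Module.Dual 𝕜 (ι → 𝕜)) b

theorem isPolyhedron_setOf_le_apply [Ring 𝕜] [PartialOrder 𝕜] [IsOrderedRing 𝕜] (i : ι) (b : 𝕜) :
    IsPolyhedron 𝕜 {x : ι → 𝕜 | b ≤ x i} := by
  simpa using isPolyhedron_setOf_le (-LinearMap.proj i : Module.Dual 𝕜 (ι → 𝕜)) (-b)

theorem isPolyhedron_setOf_apply_eq_zero [Ring 𝕜] [PartialOrder 𝕜] [IsOrderedRing 𝕜] (i : ι) :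
    IsPolyhedron 𝕜 {x : ι → 𝕜 | x i = 0} := by
  simpa [← ofPred_and, le_antisymm_iff] using
    (isPolyhedron_setOf_apply_le i 0).inter (isPolyhedron_setOf_le_apply i 0)

theorem isPolyhedron_setOf_neg_iff_mem [Ring 𝕜] [LinearOrder 𝕜] [IsOrderedRing 𝕜] [Finite ι]
    (s : Set ι) :
    IsPolyhedron 𝕜 {x : ι → 𝕜 | ∀ i, x i < 0 ↔ i ∈ s} := by
  rw [ofPred_forall]
  refine .iInter fun i => ?_
  by_cases hi : i ∈ s
  · simpa [hi] using isPolyhedron_setOf_apply_lt i 0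
  · simpa [hi] using isPolyhedron_setOf_le_apply i 0

variable [Field 𝕜] [LinearOrder 𝕜] [IsStrictOrderedRing 𝕜]

theorem IsFiniteUnionOfPolyhedra.image_update_zero [DecidableEq ι] {S : Set (ι → 𝕜)}
    (hS : IsFiniteUnionOfPolyhedra 𝕜 S) (i : ι) :
    IsFiniteUnionOfPolyhedra 𝕜 ((Function.update · i 0) '' S) := by
  rw [image_update_zero_eq_inter_sweep, inter_comm]
  exact (hS.sweep _).inter_isPolyhedron (isPolyhedron_setOf_apply_eq_zero i)

theorem IsFiniteUnionOfPolyhedra.image_piecewise_zero [DecidableEq ι] {S : Set (ι → 𝕜)}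
    (hS : IsFiniteUnionOfPolyhedra 𝕜 S) (s : Finset ι) :
    IsFiniteUnionOfPolyhedra 𝕜 ((s.piecewise (0 : ι → 𝕜) ·) '' S) := by
  induction s using Finset.induction_on with
  | empty => simpa using hS
  | insert i s _ ih =>
    have : (fun x => (insert i s).piecewise (0 : ι → 𝕜) x) =
        (Function.update · i 0) ∘ (s.piecewise (0 : ι → 𝕜) ·) :=
      funext fun x => Finset.piecewise_insert ..
    rw [this, image_comp]
    exact ih.image_update_zero i

theorem IsFiniteUnionOfPolyhedra.image_max_zero [Finite ι] {S : Set (ι → 𝕜)}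
    (hS : IsFiniteUnionOfPolyhedra 𝕜 S) :
    IsFiniteUnionOfPolyhedra 𝕜 ((fun (x : ι → 𝕜) i => max (x i) 0) '' S) := by
  classical
  have hcover : S = ⋃ s : Finset ι, S ∩ {x | ∀ i, x i < 0 ↔ i ∈ s} := by
    ext x
    simp only [mem_iUnion, mem_inter_iff]
    exact ⟨fun hx => ⟨(toFinite {i | x i < 0}).toFinset, hx, by simp⟩, fun ⟨_, hx, _⟩ => hx⟩
  rw [hcover, image_iUnion]
  refine .iUnion fun s => ?_
  have hrelu : EqOn (fun (x : ι → 𝕜) i => max (x i) 0) (s.piecewise (0 : ι → 𝕜) ·)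
      {x | ∀ i, x i < 0 ↔ i ∈ s} := by
    intro x hx
    ext i
    by_cases hi : i ∈ s
    · simp [hi, ((hx i).2 hi).le]
    · simpa [hi] using (hx i).not.2 hi
  rw [(hrelu.mono inter_subset_right).image_eq]
  exact (hS.inter_isPolyhedron (isPolyhedron_setOf_neg_iff_mem _)).image_piecewise_zero s

end Coordinates

/-- The row of the kind `H` does not use is padded with `0 ⬝ᵥ x ≤ 0` or `0 ⬝ᵥ x < 1`, so that
a polyhedron becomes a `genPoly` with as many rows of each kind as it has half-spaces. -/
theorem IsHalfspace.exists_eq_setOf_dotProduct {𝕜 ι : Type*} [Field 𝕜] [LinearOrder 𝕜]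
    [IsStrictOrderedRing 𝕜] [Fintype ι] [DecidableEq ι] {H : Set (ι → 𝕜)}
    (hH : IsHalfspace 𝕜 H) :
    ∃ (a : ι → 𝕜) (b : 𝕜) (c : ι → 𝕜) (d : 𝕜), H = {x | a ⬝ᵥ x ≤ b ∧ c ⬝ᵥ x < d} := by
  obtain ⟨f, I, ⟨b, rfl | rfl⟩, rfl⟩ := hH
  all_goals
    have hf (x : ι → 𝕜) : (dotProductEquiv 𝕜 ι).symm f ⬝ᵥ x = f x :=
      congrArg (· x) ((dotProductEquiv 𝕜 ι).apply_symm_apply f)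
  · exact ⟨(dotProductEquiv 𝕜 ι).symm f, b, 0, 1, by ext x; simp [hf]⟩
  · exact ⟨0, 0, (dotProductEquiv 𝕜 ι).symm f, b, by ext x; simp [hf]⟩

theorem isPolyhedron_genPoly (n k k' : ℕ) (a : Fin k → Fin n → ℝ) (b : Fin k → ℝ)
    (c : Fin k' → Fin n → ℝ) (d : Fin k' → ℝ) : IsPolyhedron ℝ (genPoly n k k' a b c d) := by
  have : genPoly n k k' a b c d =
      (⋂ j, {x | a j ⬝ᵥ x ≤ b j}) ∩ ⋂ j, {x | c j ⬝ᵥ x < d j} := by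
    ext x
    simp [genPoly, dotProduct]
  rw [this]
  exact .inter (.iInter fun j => isPolyhedron_setOf_le (dotProductEquiv ℝ (Fin n) (a j)) (b j))
    (.iInter fun j => isPolyhedron_setOf_lt (dotProductEquiv ℝ (Fin n) (c j)) (d j))

theorem IsPolyhedron.exists_genPoly_eq {n : ℕ} {P : Set (Fin n → ℝ)} (hP : IsPolyhedron ℝ P) :
    ∃ (k k' : ℕ) (a : Fin k → Fin n → ℝ) (b : Fin k → ℝ) (c : Fin k' → Fin n → ℝ)
      (d : Fin k' → ℝ), genPoly n k k' a b c d = P := by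
  obtain ⟨F, hF, hFH, rfl⟩ := hP
  obtain ⟨k, e, rfl⟩ := hF.fin_embedding
  choose a b c d hH using fun j => (hFH (e j) (mem_range_self j)).exists_eq_setOf_dotProduct
  refine ⟨k, k, a, b, c, d, ?_⟩
  ext x
  simp [genPoly, sInter_range, hH, forall_and, dotProduct]

theorem relu_preserves_union_polyhedra (n N : ℕ)
    (k k' : Fin N → ℕ)
    (a : ∀ s, Fin (k s) → Fin n → ℝ) (b : ∀ s, Fin (k s) → ℝ)
    (c : ∀ s, Fin (k' s) → Fin n → ℝ) (d : ∀ s, Fin (k' s) → ℝ) :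
    ∃ (M : ℕ) (l l' : Fin M → ℕ)
      (a' : ∀ t, Fin (l t) → Fin n → ℝ) (b' : ∀ t, Fin (l t) → ℝ)
      (c' : ∀ t, Fin (l' t) → Fin n → ℝ) (d' : ∀ t, Fin (l' t) → ℝ),
      relu n '' (⋃ s, genPoly n (k s) (k' s) (a s) (b s) (c s) (d s)) =
        ⋃ t, genPoly n (l t) (l' t) (a' t) (b' t) (c' t) (d' t) := by
  have hX : IsFiniteUnionOfPolyhedra ℝ (⋃ s, genPoly n (k s) (k' s) (a s) (b s) (c s) (d s)) :=
    .iUnion fun s => (isPolyhedron_genPoly _ _ _ _ _ _ _).isFiniteUnionOfPolyhedra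
  obtain ⟨F, hF, hFP, hFX⟩ := hX.image_max_zero
  obtain ⟨M, e, rfl⟩ := hF.fin_embedding
  choose l l' a' b' c' d' he using fun t => (hFP (e t) (mem_range_self t)).exists_genPoly_eq
  refine ⟨M, l, l', a', b', c', d', hFX.symm.trans ?_⟩
  simp only [sUnion_range, he]
end
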